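/- There exist finite sets X, Y, Z, a probability distribution P on X×Y×Z, and a classical channel R from Y to Y×Z with marginal channel R_{Y→Y}(y'|y) = Σ_{z'} R(y',z'|y), such that D( P ‖ (id⊗R)(P_XY) ) < I(X:Z|Y)_P − D_max( P_XY ‖ (id⊗R_{Y→Y})(P_XY) ). Consequently, the main lower bound fails if the term Λ_max(P_XY‖R_{Y→Y}) is replaced by the max-relative entropy between P_XY and its image under the marginal recovery channel. -/

import Mathlib

noncomputable section

namespace CIT

/-- A probability distribution on a finite set. -/
def IsDist {X : Type*} [Fintype X] (p : X → ℝ) : Prop :=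
  (∀ x, 0 ≤ p x) ∧ ∑ x, p x = 1

/-- Support inclusion `supp p ⊆ supp q`. -/
def suppLe {X : Type*} (p q : X → ℝ) : Prop := ∀ x, p x ≠ 0 → q x ≠ 0

open Classical in
/-- Relative entropy (base 2), with `0·log 0 = 0`, `+∞` if the support
condition fails. -/
def relEnt {X : Type*} [Fintype X] (p q : X → ℝ) : EReal :=
  if suppLe p q then ((∑ x, p x * Real.logb 2 (p x / q x) : ℝ) : EReal) else ⊤

open Classical in
/-- Max-relative entropy `D_max(p‖q) = log max_{x ∈ supp p} p(x)/q(x)`,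
`+∞` if the support condition fails. -/
def dMax {X : Type*} [Fintype X] (p q : X → ℝ) : EReal :=
  if suppLe p q then
    ((Real.logb 2 (sSup {r : ℝ | ∃ x, p x ≠ 0 ∧ r = p x / q x}) : ℝ) : EReal)
  else ⊤

open Classical in
/-- Rényi relative entropy of order `α` (base 2), with `D_1 := D` and `+∞`
when `α > 1` and the support condition fails. -/
def renyi {X : Type*} [Fintype X] (α : ℝ) (p q : X → ℝ) : EReal :=
  if α = 1 then relEnt p q
  else if 1 < α ∧ ¬ suppLe p q then ⊤
  else (((α - 1)⁻¹ * Real.logb 2 (∑ x, p x ^ α * q x ^ (1 - α)) : ℝ) : EReal)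

/-- The `XY`-marginal of a tripartite distribution. -/
def margXY {X Y Z : Type*} [Fintype Z] (P : X × Y × Z → ℝ) : X × Y → ℝ :=
  fun t => ∑ z, P (t.1, t.2, z)

/-- The `YZ`-marginal of a tripartite distribution. -/
def margYZ {X Y Z : Type*} [Fintype X] (P : X × Y × Z → ℝ) : Y × Z → ℝ :=
  fun t => ∑ x, P (x, t.1, t.2)

/-- The `Y`-marginal of a tripartite distribution. -/
def margY {X Y Z : Type*} [Fintype X] [Fintype Z] (P : X × Y × Z → ℝ) : Y → ℝ :=
  fun y => ∑ x, ∑ z, P (x, y, z)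

/-- Conditional mutual information
`I(X:Z|Y)_P = Σ P(x,y,z) log( P(x,y,z)·P_Y(y) / (P_XY(x,y)·P_YZ(y,z)) )`. -/
def cmi {X Y Z : Type*} [Fintype X] [Fintype Y] [Fintype Z] (P : X × Y × Z → ℝ) : ℝ :=
  ∑ s : X × Y × Z,
    P s * Real.logb 2 (P s * margY P s.2.1 / (margXY P (s.1, s.2.1) * margYZ P (s.2.1, s.2.2)))

/-- A classical channel from `Y` to `W`: a family of conditional distributions. -/
def IsChannel {Y W : Type*} [Fintype W] (R : Y → W → ℝ) : Prop :=
  ∀ y, (∀ w, 0 ≤ R y w) ∧ ∑ w, R y w = 1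

/-- Action `(id ⊗ R)` of a channel `R : Y → W` on a joint distribution on `X × Y`. -/
def applyChan {X Y W : Type*} [Fintype Y] (R : Y → W → ℝ) (P : X × Y → ℝ) : X × W → ℝ :=
  fun t => ∑ y, P (t.1, y) * R y t.2

/-- Action of a channel `R : Y → W` on a distribution on `Y`. -/
def chanOnDist {Y W : Type*} [Fintype Y] (R : Y → W → ℝ) (q : Y → ℝ) : W → ℝ :=
  fun w => ∑ y, q y * R y w

/-- Marginal channel `R_{Y→Y}(y'|y) = Σ_{z'} R(y',z'|y)`. -/
def margChan {Y Y' Z' : Type*} [Fintype Z'] (R : Y → Y' × Z' → ℝ) : Y → Y' → ℝ :=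
  fun y y' => ∑ z', R y (y', z')

end CIT

/-!
Take `Y` uniform on `Fin 2`, `X = Y` with probability `3/4` and `Z = X + Y` (mod 2), so that
`I(X:Z|Y) = h(1/4) = 2 - (3/4) log 3`. The channel `R` flips `y` with probability `1/6` and
records in `z'` whether it flipped. Then `D(P ‖ (id⊗R)(P_XY)) = (3/4) log (6/5) + 1/4` and
`D_max(P_XY ‖ (id⊗R_{Y→Y})(P_XY)) = log (9/8)`, and the claimed inequality comes down to
`3^14 < 2^16 · 5^3`.
-/

namespace CIT

theorem dMax_eq_logb_of_isGreatest {X : Type*} [Fintype X] {p q : X → ℝ} (h : suppLe p q)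
    {r : ℝ} (hr : IsGreatest {r : ℝ | ∃ x, p x ≠ 0 ∧ r = p x / q x} r) :
    dMax p q = ((Real.logb 2 r : ℝ) : EReal) := by
  rw [dMax, if_pos h, hr.csSup_eq]

namespace Counterexample

def P : Fin 2 × Fin 2 × Fin 2 → ℝ := fun s =>
  ![![![3/8, 0], ![0, 1/8]], ![![0, 1/8], ![3/8, 0]]] s.1 s.2.1 s.2.2

def R : Fin 2 → Fin 2 × Fin 2 → ℝ := fun y w =>
  ![![![5/6, 0], ![0, 1/6]], ![![0, 1/6], ![5/6, 0]]] y w.1 w.2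

theorem isDist_P : IsDist P := by
  refine ⟨fun ⟨x, y, z⟩ => ?_, ?_⟩
  · fin_cases x <;> fin_cases y <;> fin_cases z <;> norm_num [P]
  · norm_num [Fintype.sum_prod_type, Fin.sum_univ_two, P]

theorem isChannel_R : IsChannel R := by
  intro y
  refine ⟨fun ⟨y', z'⟩ => ?_, ?_⟩
  · fin_cases y <;> fin_cases y' <;> fin_cases z' <;> norm_num [R]
  · fin_cases y <;> norm_num [Fintype.sum_prod_type, Fin.sum_univ_two, R]

theorem margXY_P (x y : Fin 2) : margXY P (x, y) = if x = y then 3/8 else 1/8 := by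
  fin_cases x <;> fin_cases y <;> norm_num [margXY, Fin.sum_univ_two, P]

theorem margYZ_P (y z : Fin 2) : margYZ P (y, z) = if z = 0 then 3/8 else 1/8 := by
  fin_cases y <;> fin_cases z <;> norm_num [margYZ, Fin.sum_univ_two, P]

theorem margY_P (y : Fin 2) : margY P y = 1/2 := by
  fin_cases y <;> norm_num [margY, Fin.sum_univ_two, P]

theorem applyChan_R_margXY_P (x y' z' : Fin 2) :
    applyChan R (margXY P) (x, y', z') =
      ![![![5/16, 1/48], ![5/48, 1/16]], ![![5/48, 1/16], ![5/16, 1/48]]] x y' z' := by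
  fin_cases x <;> fin_cases y' <;> fin_cases z' <;>
    norm_num [applyChan, Fin.sum_univ_two, margXY_P, R]

theorem applyChan_margChan_R_margXY_P (x y' : Fin 2) :
    applyChan (margChan R) (margXY P) (x, y') = if x = y' then 1/3 else 1/6 := by
  fin_cases x <;> fin_cases y' <;>
    norm_num [applyChan, margChan, Fin.sum_univ_two, margXY_P, R]

theorem relEnt_P : relEnt P (applyChan R (margXY P)) =
    (((3/4) * Real.logb 2 (6/5) + 1/4 : ℝ) : EReal) := by
  rw [relEnt, if_pos]
  · congr 1
    norm_num [Fintype.sum_prod_type, Fin.sum_univ_two, applyChan_R_margXY_P, P]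
    ring
  · rintro ⟨x, y', z'⟩ -
    fin_cases x <;> fin_cases y' <;> fin_cases z' <;> norm_num [applyChan_R_margXY_P]

theorem cmi_P : cmi P = 2 - (3/4) * Real.logb 2 3 := by
  norm_num [cmi, Fintype.sum_prod_type, Fin.sum_univ_two, margXY_P, margYZ_P, margY_P, P]
  have logb_four : Real.logb 2 4 = 2 := by
    rw [show (4 : ℝ) = 2 ^ (2 : ℝ) by norm_num, Real.logb_rpow (by norm_num) (by norm_num)]
  rw [Real.logb_div (by norm_num) (by norm_num), logb_four]
  ring

theorem dMax_P : dMax (margXY P) (applyChan (margChan R) (margXY P)) =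
    ((Real.logb 2 (9/8) : ℝ) : EReal) := by
  refine dMax_eq_logb_of_isGreatest ?_ ⟨⟨(0, 0), ?_, ?_⟩, ?_⟩
  · rintro ⟨x, y'⟩ -
    rw [applyChan_margChan_R_margXY_P]
    split_ifs <;> norm_num
  · norm_num [margXY_P]
  · norm_num [margXY_P, applyChan_margChan_R_margXY_P]
  · rintro r ⟨⟨x, y'⟩, -, rfl⟩
    rw [margXY_P, applyChan_margChan_R_margXY_P]
    split_ifs <;> norm_num

theorem relEnt_value_lt_cmi_sub_dMax_value :
    3/4 * Real.logb 2 (6/5) + 1/4 < 2 - 3/4 * Real.logb 2 3 - Real.logb 2 (9/8) := by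
  have pow_lt : Real.logb 2 ((3 : ℝ) ^ 14) < Real.logb 2 ((2 : ℝ) ^ 16 * 5 ^ 3) :=
    Real.logb_lt_logb (by norm_num) (by positivity) (by norm_num)
  have logb_two : Real.logb 2 2 = 1 := Real.logb_self_eq_one (by norm_num)
  have logb_six_fifths : Real.logb 2 (6/5) = 1 + Real.logb 2 3 - Real.logb 2 5 := by
    rw [Real.logb_div (by norm_num) (by norm_num), show (6 : ℝ) = 2 * 3 by norm_num,
      Real.logb_mul (by norm_num) (by norm_num), logb_two]
  have logb_nine_eighths : Real.logb 2 (9/8) = 2 * Real.logb 2 3 - 3 := by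
    rw [Real.logb_div (by norm_num) (by norm_num), show (9 : ℝ) = 3 ^ 2 by norm_num,
      show (8 : ℝ) = 2 ^ 3 by norm_num, Real.logb_pow, Real.logb_pow, logb_two]
    ring
  rw [Real.logb_mul (by positivity) (by positivity), Real.logb_pow, Real.logb_pow,
    Real.logb_pow, logb_two] at pow_lt
  rw [logb_six_fifths, logb_nine_eighths]
  push_cast at pow_lt
  linarith

end Counterexample

end CIT

open CIT in
/-- there is a tripartite distribution `P` and a channel `R`
from `Y` to `Y×Z` such that
`D(P ‖ (id⊗R)(P_XY)) < I(X:Z|Y)_P − D_max(P_XY ‖ (id⊗R_{Y→Y})(P_XY))`. -/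
theorem modified_lambda_term_fails :
    ∃ (nx ny nz : ℕ) (P : Fin nx × Fin ny × Fin nz → ℝ)
      (R : Fin ny → Fin ny × Fin nz → ℝ),
      IsDist P ∧ IsChannel R ∧
        relEnt P (applyChan R (margXY P)) <
          ((cmi P : ℝ) : EReal) - dMax (margXY P) (applyChan (margChan R) (margXY P)) := by
  refine ⟨2, 2, 2, Counterexample.P, Counterexample.R, Counterexample.isDist_P,
    Counterexample.isChannel_R, ?_⟩
  rw [Counterexample.relEnt_P, Counterexample.cmi_P, Counterexample.dMax_P, ← EReal.coe_sub,
    EReal.coe_lt_coe_iff]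
  exact Counterexample.relEnt_value_lt_cmi_sub_dMax_value
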